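/- arXiv:2404.16703 — 3 statements merged into one kernel-verified Lean document; each statement's English description precedes it below -/
import Mathlib

section
/- Let n ≥ 1 and let (q,p) ∈ (Fin n → pH) × pH satisfy ∑ₐ normSq qₐ + normSq p = 1 and normSq(p−1) ≠ 0. Then re((p−1)⁻¹·(p+1)) = −∑ₐ normSq((p−1)⁻¹·qₐ). In other words, the paraquaternionic Cayley transform C(q,p) = ((p−1)⁻¹·q, (p−1)⁻¹·(p+1)) maps the pseudo-sphere {∑ₐ normSq qₐ + normSq p = 1} (away from the set where normSq(p−1) = 0) into the hypersurface Σ = {(q',p') : re p' = −∑ₐ normSq q'ₐ}. -/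
open scoped Quaternion

/-- The split quaternions (para-quaternions). -/
local notation "pH" => ℍ[ℝ, 1, 1]

/-- The norm form `normSq p = p * star p` (a real scalar) of signature (2,2). -/
noncomputable def normSq (p : ℍ[ℝ, 1, 1]) : ℝ := (p * star p).re

/-- The inverse of a split quaternion `a` with `normSq a ≠ 0`:
`a⁻¹ = (normSq a)⁻¹ • star a`, a two-sided inverse. -/
noncomputable def pinv (a : ℍ[ℝ, 1, 1]) : ℍ[ℝ, 1, 1] := (normSq a)⁻¹ • star a

/-! Since the norm form is multiplicative and `normSq a⁻¹ = (normSq a)⁻¹`, both sides of the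
identity are `(normSq (p - 1))⁻¹` times a real number: `re (star (p - 1) * (p + 1)) = normSq p - 1`
on the left and `∑ₐ normSq qₐ` on the right, and the sphere equation says exactly that these
are opposite. -/

open QuaternionAlgebra

theorem coe_normSq (a : pH) : (normSq a : pH) = a * star a :=
  (mul_star_eq_coe a).symm

theorem normSq_eq_re_star_mul (a : pH) : normSq a = (star a * a).re := by
  rw [normSq, star_comm_self']

theorem normSq_one : normSq 1 = 1 := by
  simp [normSq]

theorem normSq_mul (a b : pH) : normSq (a * b) = normSq a * normSq b :=
  coe_injective <| by
    rw [coe_mul, coe_normSq, coe_normSq, coe_normSq, star_mul, mul_assoc, ← mul_assoc b,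
      ← coe_normSq, ← mul_assoc, ← coe_commutes, mul_assoc, coe_commutes]

theorem mul_pinv {a : pH} (ha : normSq a ≠ 0) : a * pinv a = 1 := by
  rw [pinv, mul_smul_comm, ← coe_normSq, smul_coe, inv_mul_cancel₀ ha, coe_one]

theorem normSq_pinv (a : pH) : normSq (pinv a) = (normSq a)⁻¹ := by
  by_cases ha : normSq a = 0
  -- junk case: `pinv a = 0` and `0⁻¹ = 0`
  · rw [pinv, ha, inv_zero, zero_smul]
    simp [normSq]
  · refine eq_inv_of_mul_eq_one_right ?_
    rw [← normSq_mul, mul_pinv ha, normSq_one]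

theorem re_pinv_mul (a b : pH) : (pinv a * b).re = (normSq a)⁻¹ * (star a * b).re := by
  rw [pinv, smul_mul_assoc, re_smul, smul_eq_mul]

theorem re_star_sub_one_mul_add_one (p : pH) :
    (star (p - 1) * (p + 1)).re = normSq p - 1 := by
  have hexpand : star (p - 1) * (p + 1) = star p * p + (star p - p) - 1 := by
    rw [star_sub, star_one]; noncomm_ring
  rw [hexpand, normSq_eq_re_star_mul]
  simp only [re_sub, re_add, re_star, re_one]
  ring

theorem cayley_maps_sphere_to_Sigma_general (n : ℕ)
    (q : Fin n → pH) (p : pH)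
    (hS : ∑ a, normSq (q a) + normSq p = 1) :
    (pinv (p - 1) * (p + 1)).re = -∑ a, normSq (pinv (p - 1) * q a) := by
  simp only [re_pinv_mul, re_star_sub_one_mul_add_one, normSq_mul, normSq_pinv, ← Finset.mul_sum]
  linear_combination (normSq (p - 1))⁻¹ * hS

/-- The paraquaternionic Cayley transform
`C(q,p) = ((p−1)⁻¹·q, (p−1)⁻¹·(p+1))` maps the pseudo-sphere
`∑ₐ normSq qₐ + normSq p = 1` (away from `normSq (p−1) = 0`) into the hypersurface
`Σ = {(q',p') : re p' = −∑ₐ normSq q'ₐ}`. -/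
theorem cayley_maps_sphere_to_Sigma (n : ℕ) (hn : 1 ≤ n)
    (q : Fin n → pH) (p : pH)
    (hS : ∑ a, normSq (q a) + normSq p = 1)
    (h1 : normSq (p - 1) ≠ 0) :
    (pinv (p - 1) * (p + 1)).re = -∑ a, normSq (pinv (p - 1) * q a) :=
  cayley_maps_sphere_to_Sigma_general n q p hS
end

section
/- Let n ≥ 1, let p, P ∈ pH, let q, Q : Fin n → pH, and assume ∑ₐ qₐ·star qₐ + p·star p = 1 in pH. Let u ∈ pH be a two-sided inverse of p−1 (i.e., u·(p−1) = (p−1)·u = 1) and set v = star u, so that v is a two-sided inverse of star p − 1. Then the following identity holds: −u·P·u + v·(star P)·v + ∑ₐ ( u·(Qₐ − P·u·qₐ)·(star qₐ)·v − u·qₐ·(star Qₐ − (star qₐ)·v·(star P))·v ) = u·( ∑ₐ(Qₐ·star qₐ − qₐ·star Qₐ) + P·star p − p·star P )·v. (This is the algebraic identity underlying the computation that the paraquaternionic Cayley transform pulls back the standard contact form of the pseudo-sphere to a conformal multiple of the standard form of the paraquaternionic Heisenberg group, equation (15) of the paper.) -/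
/-!
With `v = star u`, the relation `u * (p - 1) = 1` reads `u * p = 1 + u`, and its conjugate
`star p * v = 1 + v`. The terms of the sum that are quadratic in `q` collect into
`u * (∑ₐ qₐ * star qₐ) * v`, which on the pseudo-sphere equals `u * (1 - p * star p) * v`
and hence `-(1 + u + v)`. After this substitution both sides are the same noncommutative
polynomial in `u`, `v`, `P`, `star P` and the `Q`-terms.
-/

open scoped Quaternion

local notation "pH" => ℍ[ℝ, 1, 1]

section Ring

variable {R : Type*} [Ring R]

theorem mul_eq_one_add_self_of_mul_sub_one {u p : R} (h : u * (p - 1) = 1) :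
    u * p = 1 + u := by
  rw [← h]; noncomm_ring

theorem mul_eq_one_add_self_of_sub_one_mul {p v : R} (h : (p - 1) * v = 1) :
    p * v = 1 + v := by
  rw [← h]; noncomm_ring

variable [StarRing R]

theorem star_mul_star_sub_one_eq_one {p u : R} (h : (p - 1) * u = 1) :
    star u * (star p - 1) = 1 := by
  simpa [star_sub] using congrArg star h

theorem star_sub_one_mul_star_eq_one {u p : R} (h : u * (p - 1) = 1) :
    (star p - 1) * star u = 1 := by
  simpa [star_sub] using congrArg star h

theorem mul_one_sub_mul_star_mul_star {u p : R} (h : u * (p - 1) = 1) :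
    u * (1 - p * star p) * star u = -(1 + u + star u) := calc
  u * (1 - p * star p) * star u = u * star u - (u * p) * (star p * star u) := by noncomm_ring
  _ = u * star u - (1 + u) * (1 + star u) := by
    rw [mul_eq_one_add_self_of_mul_sub_one h,
      mul_eq_one_add_self_of_sub_one_mul (star_sub_one_mul_star_eq_one h)]
  _ = -(1 + u + star u) := by noncomm_ring

theorem sum_mul_sub_mul_mul_star_sub_mul_mul_star {ι : Type*} (s : Finset ι)
    (u v P : R) (q Q : ι → R) :
    ∑ a ∈ s, (u * (Q a - P * u * q a) * star (q a) * v
        - u * q a * (star (Q a) - star (q a) * v * star P) * v)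
      = u * (∑ a ∈ s, (Q a * star (q a) - q a * star (Q a))) * v
        - u * P * (u * (∑ a ∈ s, q a * star (q a)) * v)
        + u * (∑ a ∈ s, q a * star (q a)) * v * star P * v := by
  simp only [Finset.mul_sum, Finset.sum_mul, ← Finset.sum_sub_distrib,
    ← Finset.sum_add_distrib]
  refine Finset.sum_congr rfl fun a _ => ?_
  noncomm_ring

end Ring

theorem cayley_pullback_identity_general (n : ℕ)
    (p P : pH) (q Q : Fin n → pH)
    (hs : ∑ a, q a * star (q a) + p * star p = 1)
    (u : pH) (hu1 : u * (p - 1) = 1) (hu2 : (p - 1) * u = 1) :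
    (star u * (star p - 1) = 1 ∧ (star p - 1) * star u = 1) ∧
    (-(u * P * u) + star u * star P * star u
      + ∑ a, (u * (Q a - P * u * q a) * star (q a) * star u
              - u * q a * (star (Q a) - star (q a) * star u * star P) * star u)
      = u * ((∑ a, (Q a * star (q a) - q a * star (Q a)))
              + P * star p - p * star P) * star u) := by
  have hv := star_sub_one_mul_star_eq_one hu1
  refine ⟨⟨star_mul_star_sub_one_eq_one hu2, hv⟩, ?_⟩
  have hup := mul_eq_one_add_self_of_mul_sub_one hu1
  have hpv := mul_eq_one_add_self_of_sub_one_mul hv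
  have hsphere : u * (∑ a, q a * star (q a)) * star u = -(1 + u + star u) := by
    rw [eq_sub_of_add_eq hs, mul_one_sub_mul_star_mul_star hu1]
  rw [sum_mul_sub_mul_mul_star_sub_mul_mul_star, hsphere]
  calc _ = u * (∑ a, (Q a * star (q a) - q a * star (Q a))) * star u
        + u * P * (1 + star u) - (1 + u) * star P * star u := by noncomm_ring
    _ = _ := by rw [← hup, ← hpv]; noncomm_ring

/-- The algebraic identity underlying the computation that the paraquaternionic Cayley
transform pulls back the standard contact form of the pseudo-sphere to a conformal
multiple of the standard form of the paraquaternionic Heisenberg group (equation (15)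
of the paper).  Here `P` and `Qₐ` play the role of the differentials `dp` and `dqₐ`,
and the hypothesis `∑ₐ qₐ·star qₐ + p·star p = 1` says `(q,p)` lies on the
pseudo-sphere. -/
theorem cayley_pullback_identity (n : ℕ) (hn : 1 ≤ n)
    (p P : pH) (q Q : Fin n → pH)
    (hs : ∑ a, q a * star (q a) + p * star p = 1)
    (u : pH) (hu1 : u * (p - 1) = 1) (hu2 : (p - 1) * u = 1) :
    (star u * (star p - 1) = 1 ∧ (star p - 1) * star u = 1) ∧
    (-(u * P * u) + star u * star P * star u
      + ∑ a, (u * (Q a - P * u * q a) * star (q a) * star u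
              - u * q a * (star (Q a) - star (q a) * star u * star P) * star u)
      = u * ((∑ a, (Q a * star (q a) - q a * star (Q a)))
              + P * star p - p * star P) * star u) :=
  cayley_pullback_identity_general n p P q Q hs u hu1 hu2
end

section
/- Let V be a real vector space carrying a para-hypercomplex structure I₁, I₂, I₃, and let Υ be the Casimir operator on bilinear forms, Υ(B)(X,Y) = −B(I₁X,I₁Y) − B(I₂X,I₂Y) + B(I₃X,I₃Y). Then Υ satisfies the quadratic identity Υ(Υ(B)) = 2·Υ(B) + 3·B for every bilinear form B on V; equivalently, Υ² − 2Υ − 3·id = 0 on the space of bilinear forms, so the only possible eigenvalues of Υ are 3 and −1. -/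
/-!
Writing `Υ B = ∑ₐ εₐ B(Iₐ ·, Iₐ ·)` with `ε = (-1, -1, 1)`, the square `Υ (Υ B)` is the sum over
ordered pairs `(a, b)` of `εₐ ε_b B(IₐI_b ·, IₐI_b ·)`. Every product `IₐI_b` is `±id` or `±I_c`,
and the sign disappears because `B` is evaluated at the same map in both slots. The three diagonal
terms give `3 B`; since `εₐ ε_b = ε_c` whenever `IₐI_b = ±I_c`, the six off-diagonal ones add up
to `2 Υ B`.
-/

structure IsParaQuaternionTriple {A : Type*} [Ring A] (i j k : A) : Prop where
  i_mul_i : i * i = 1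
  j_mul_j : j * j = 1
  i_mul_j : i * j = k
  j_mul_i : j * i = -k

namespace IsParaQuaternionTriple

variable {A : Type*} [Ring A] {i j k : A}

theorem i_mul_k (h : IsParaQuaternionTriple i j k) : i * k = j := by
  rw [← h.i_mul_j, ← mul_assoc, h.i_mul_i, one_mul]

theorem k_mul_j (h : IsParaQuaternionTriple i j k) : k * j = i := by
  rw [← h.i_mul_j, mul_assoc, h.j_mul_j, mul_one]

theorem k_mul_i (h : IsParaQuaternionTriple i j k) : k * i = -j := by
  rw [← h.i_mul_j, mul_assoc, h.j_mul_i, mul_neg, h.i_mul_k]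

theorem j_mul_k (h : IsParaQuaternionTriple i j k) : j * k = -i := by
  rw [← h.i_mul_j, ← mul_assoc, h.j_mul_i, neg_mul, h.k_mul_j]

theorem k_mul_k (h : IsParaQuaternionTriple i j k) : k * k = -1 := by
  calc k * k = k * i * j := by rw [mul_assoc, h.i_mul_j]
    _ = -1 := by rw [h.k_mul_i, neg_mul, h.j_mul_j]

end IsParaQuaternionTriple

section Casimir

variable {R M N : Type*} [CommRing R] [AddCommGroup M] [Module R M] [AddCommGroup N] [Module R N]

def casimir (I₁ I₂ I₃ : Module.End R M) (B : M →ₗ[R] M →ₗ[R] N) : M →ₗ[R] M →ₗ[R] N :=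
  -B.compl₁₂ I₁ I₁ - B.compl₁₂ I₂ I₂ + B.compl₁₂ I₃ I₃

@[simp]
theorem casimir_apply (I₁ I₂ I₃ : Module.End R M) (B : M →ₗ[R] M →ₗ[R] N) (x y : M) :
    casimir I₁ I₂ I₃ B x y = -B (I₁ x) (I₁ y) - B (I₂ x) (I₂ y) + B (I₃ x) (I₃ y) := rfl

theorem casimir_casimir {I₁ I₂ I₃ : Module.End R M} (h : IsParaQuaternionTriple I₁ I₂ I₃)
    (B : M →ₗ[R] M →ₗ[R] N) :
    casimir I₁ I₂ I₃ (casimir I₁ I₂ I₃ B) = (2 : R) • casimir I₁ I₂ I₃ B + (3 : R) • B := by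
  have table {f g e : Module.End R M} (hfg : f * g = e) (x : M) : f (g x) = e x :=
    LinearMap.congr_fun hfg x
  ext x y
  simp only [casimir_apply, LinearMap.add_apply, LinearMap.smul_apply, table h.i_mul_i,
    table h.j_mul_j, table h.k_mul_k, table h.i_mul_j, table h.j_mul_i, table h.i_mul_k,
    table h.k_mul_i, table h.j_mul_k, table h.k_mul_j, Module.End.one_apply, LinearMap.neg_apply,
    map_neg]
  module

end Casimir

theorem casimir_quadratic_identity_general (V : Type*) [AddCommGroup V] [Module ℝ V]
    (I₁ I₂ I₃ : V →ₗ[ℝ] V)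
    (h11 : I₁ ∘ₗ I₁ = LinearMap.id) (h22 : I₂ ∘ₗ I₂ = LinearMap.id)
    (h12 : I₁ ∘ₗ I₂ = I₃) (h21 : I₂ ∘ₗ I₁ = -I₃)
    (Υ : (V →ₗ[ℝ] V →ₗ[ℝ] ℝ) → (V →ₗ[ℝ] V →ₗ[ℝ] ℝ))
    (hΥ : ∀ (B : V →ₗ[ℝ] V →ₗ[ℝ] ℝ) (X Y : V),
      Υ B X Y = -B (I₁ X) (I₁ Y) - B (I₂ X) (I₂ Y) + B (I₃ X) (I₃ Y))
    (B : V →ₗ[ℝ] V →ₗ[ℝ] ℝ) :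
    Υ (Υ B) = (2 : ℝ) • Υ B + (3 : ℝ) • B := by
  obtain rfl : Υ = casimir I₁ I₂ I₃ := funext fun B => LinearMap.ext₂ (hΥ B)
  exact casimir_casimir ⟨h11, h22, h12, h21⟩ B

/-- Let `V` carry a para-hypercomplex structure `I₁, I₂, I₃` (with `I₁² = I₂² = id`,
`I₃² = −id`, `I₁I₂ = −I₂I₁ = I₃`) and let `Υ` be the Casimir operator on bilinear
forms, `Υ(B)(X,Y) = −B(I₁X,I₁Y) − B(I₂X,I₂Y) + B(I₃X,I₃Y)`.  Then
`Υ² = 2Υ + 3·id`, so the only possible eigenvalues of `Υ` are `3` and `−1`. -/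
theorem casimir_quadratic_identity (V : Type*) [AddCommGroup V] [Module ℝ V]
    (I₁ I₂ I₃ : V →ₗ[ℝ] V)
    (h11 : I₁ ∘ₗ I₁ = LinearMap.id) (h22 : I₂ ∘ₗ I₂ = LinearMap.id)
    (h33 : I₃ ∘ₗ I₃ = -LinearMap.id)
    (h12 : I₁ ∘ₗ I₂ = I₃) (h21 : I₂ ∘ₗ I₁ = -I₃)
    (Υ : (V →ₗ[ℝ] V →ₗ[ℝ] ℝ) → (V →ₗ[ℝ] V →ₗ[ℝ] ℝ))
    (hΥ : ∀ (B : V →ₗ[ℝ] V →ₗ[ℝ] ℝ) (X Y : V),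
      Υ B X Y = -B (I₁ X) (I₁ Y) - B (I₂ X) (I₂ Y) + B (I₃ X) (I₃ Y))
    (B : V →ₗ[ℝ] V →ₗ[ℝ] ℝ) :
    Υ (Υ B) = (2 : ℝ) • Υ B + (3 : ℝ) • B :=
  casimir_quadratic_identity_general V I₁ I₂ I₃ h11 h22 h12 h21 Υ hΥ B
end
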